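/- arXiv:2409.10988 — 2 statements merged into one kernel-verified Lean document; each statement's English description precedes it below -/
import Mathlib

section
/- Let ω = e^{2πi/3} and let λ ∈ ℂ with Im λ ≥ 0 and |λ| > 1, z = λ^{1/3}, and assume that |(−λ)^{1/3} − 2πn/√3| > 1 for every integer n ≥ 1 (cube roots taken with argument in (−π/3, π/3]). Then |e^{(ω²−1)z} − 1| > 1/3. -/
/-!
Put `z = λ^{1/3}` and `w = (ω² - 1) z`. If `Re w ≤ -1/2`, then `|e^w| ≤ e^{-1/2} < 2/3` and we
are done; this covers `λ > 0`, where `Re w = -3|z|/2`. Otherwise `arg λ > 0`, so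
`(-λ)^{1/3} = e^{-iπ/3} z` and, since `(ω² - 1) e^{iπ/3} = -i√3`, `w = -i√3 (-λ)^{1/3}`.
The excluded discs, together with `|λ| > 1` and `Re (-λ)^{1/3} > 0`, then keep `w` at distance
more than `√3` from every point of `2πiℤ`. As `|Re w| < 1/2`, this keeps `Im w` at distance more
than `π/2` from `2πℤ`, so `cos (Im w) ≤ 0` and `Re (e^w - 1) ≤ -1`.
-/

open Complex

open scoped Real

theorem ofReal_sqrt_three_sq : (√3 : ℂ) ^ 2 = 3 := by
  exact_mod_cast Real.sq_sqrt (by norm_num : (0 : ℝ) ≤ 3)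

theorem exp_pi_mul_I_div_three : exp (π * I / 3) = 1 / 2 + √3 / 2 * I := by
  rw [show (π : ℂ) * I / 3 = ((π / 3 : ℝ) : ℂ) * I by push_cast; ring, exp_mul_I,
    ← ofReal_cos, ← ofReal_sin, Real.cos_pi_div_three, Real.sin_pi_div_three]
  push_cast
  ring

theorem exp_two_pi_mul_I_div_three : exp (2 * π * I / 3) = -1 / 2 + √3 / 2 * I := by
  rw [show 2 * (π : ℂ) * I / 3 = (2 : ℕ) * (π * I / 3) by push_cast; ring, exp_nat_mul,
    exp_pi_mul_I_div_three]
  linear_combination (I ^ 2 / 4) * ofReal_sqrt_three_sq + 3 / 4 * I_sq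

theorem exp_two_pi_mul_I_div_three_sq_sub_one :
    exp (2 * π * I / 3) ^ 2 - 1 = -3 / 2 - √3 / 2 * I := by
  rw [exp_two_pi_mul_I_div_three]
  linear_combination (I ^ 2 / 4) * ofReal_sqrt_three_sq + 3 / 4 * I_sq

theorem neg_three_halves_sub_mul_exp_pi_mul_I_div_three :
    (-3 / 2 - √3 / 2 * I) * exp (π * I / 3) = -(√3 * I) := by
  rw [exp_pi_mul_I_div_three]
  linear_combination (-I ^ 2 / 4) * ofReal_sqrt_three_sq - 3 / 4 * I_sq

theorem arg_neg_of_arg_pos {x : ℂ} (hx : 0 < arg x) : arg (-x) = arg x - π := by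
  refine arg_neg_eq_arg_sub_pi_iff.2 ?_
  rcases (arg_nonneg_iff.1 hx.le).lt_or_eq with him | him
  · exact Or.inl him
  · exact Or.inr ⟨him.symm, not_le.1 fun hre => hx.ne' (arg_eq_zero_iff.2 ⟨hre, him.symm⟩)⟩

theorem cpow_eq_exp_mul_neg_cpow_of_arg_pos {x : ℂ} (hx : 0 < arg x) (y : ℂ) :
    x ^ y = exp (π * I * y) * (-x) ^ y := by
  have hx0 : x ≠ 0 := by rintro rfl; simp at hx
  have hlog : log (-x) = log x - π * I := by
    apply Complex.ext <;> simp [log_re, log_im, arg_neg_of_arg_pos hx]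
  rw [cpow_def_of_ne_zero hx0, cpow_def_of_ne_zero (neg_ne_zero.2 hx0), hlog, ← exp_add]
  ring_nf

theorem cpow_ofReal_of_arg_eq_zero {x : ℂ} (hx : arg x = 0) (y : ℝ) :
    x ^ (y : ℂ) = ((‖x‖ ^ y : ℝ) : ℂ) := by
  apply Complex.ext
  · rw [cpow_ofReal_re, hx, zero_mul, Real.cos_zero, mul_one, ofReal_re]
  · rw [cpow_ofReal_im, hx, zero_mul, Real.sin_zero, mul_zero, ofReal_im]

theorem re_cpow_ofReal_pos {x : ℂ} (hx : x ≠ 0) {y : ℝ} (hy : |y| < 1 / 2) :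
    0 < (x ^ (y : ℂ)).re := by
  rw [cpow_ofReal_re]
  refine mul_pos (Real.rpow_pos_of_pos (norm_pos_iff.2 hx) _)
    (Real.cos_pos_of_mem_Ioo (abs_lt.1 ?_))
  calc |arg x * y| = |arg x| * |y| := abs_mul _ _
    _ ≤ π * |y| := by gcongr; exact abs_arg_le_pi x
    _ < π / 2 := by nlinarith [Real.pi_pos]

theorem im_cpow_ofReal_nonpos {x : ℂ} (hx : arg x ≤ 0) {y : ℝ} (hy₀ : 0 ≤ y) (hy₁ : y ≤ 1) :
    (x ^ (y : ℂ)).im ≤ 0 := by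
  rw [cpow_ofReal_im]
  refine mul_nonpos_of_nonneg_of_nonpos (by positivity)
    (Real.sin_nonpos_of_nonpos_of_neg_pi_le (mul_nonpos_of_nonpos_of_nonneg hx hy₀) ?_)
  nlinarith [neg_pi_lt_arg x]

theorem one_lt_norm_sub_int_mul {ζ : ℂ} {c : ℝ} (hc : 1 ≤ c) (hre : 0 < ζ.re) (h0 : 1 < ‖ζ‖)
    (h : ∀ n : ℕ, 1 ≤ n → 1 < ‖ζ - ((n * c : ℝ) : ℂ)‖) (n : ℤ) :
    1 < ‖ζ - ((n * c : ℝ) : ℂ)‖ := by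
  rcases lt_trichotomy n 0 with hn | rfl | hn
  · have hn' : (1 : ℝ) ≤ -n := by exact_mod_cast Int.neg_pos_of_neg hn
    calc (1 : ℝ) ≤ -n * c := by nlinarith
      _ < (ζ - ((n * c : ℝ) : ℂ)).re := by rw [sub_re, ofReal_re]; linarith
      _ ≤ ‖ζ - ((n * c : ℝ) : ℂ)‖ := re_le_norm _
  · simpa using h0
  · lift n to ℕ using hn.le
    exact_mod_cast h n (by omega)

theorem one_lt_norm_cpow_one_third_sub_int_mul {x : ℂ} (hx : 1 < ‖x‖) {c : ℝ} (hc : 1 ≤ c)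
    (h : ∀ n : ℕ, 1 ≤ n → 1 < ‖x ^ ((1 : ℂ) / 3) - ((n * c : ℝ) : ℂ)‖) (n : ℤ) :
    1 < ‖x ^ ((1 : ℂ) / 3) - ((n * c : ℝ) : ℂ)‖ := by
  have hthird : (1 : ℂ) / 3 = ((1 / 3 : ℝ) : ℂ) := by push_cast; ring
  refine one_lt_norm_sub_int_mul hc ?_ ?_ h n
  · rw [hthird]
    exact re_cpow_ofReal_pos (norm_pos_iff.1 (by linarith)) (by norm_num [abs_of_pos])
  · rw [hthird, norm_cpow_real]
    exact Real.one_lt_rpow hx (by norm_num)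

theorem Real.cos_nonpos_of_forall_pi_div_two_le_abs_add_int_mul_two_pi {y : ℝ}
    (h : ∀ n : ℤ, π / 2 ≤ |y + n * (2 * π)|) : Real.cos y ≤ 0 := by
  by_contra! hcos
  rw [← Real.Angle.cos_coe, Real.Angle.cos_pos_iff_abs_toReal_lt_pi_div_two,
    Real.Angle.toReal_coe, toIocMod, zsmul_eq_mul] at hcos
  have hfar := h (-toIocDiv Real.two_pi_pos (-π) y)
  rw [Int.cast_neg, neg_mul, ← sub_eq_add_neg] at hfar
  exact hcos.not_ge hfar

theorem one_third_lt_norm_exp_sub_one_of_re_le {w : ℂ} (hw : w.re ≤ -1 / 2) :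
    1 / 3 < ‖exp w - 1‖ := by
  have hexp : Real.exp w.re < 2 / 3 :=
    calc Real.exp w.re ≤ (Real.exp (1 / 2))⁻¹ := by
          rw [← Real.exp_neg]; exact Real.exp_le_exp.2 (by linarith)
      _ < 2 / 3 := by
          rw [inv_lt_comm₀ (Real.exp_pos _) (by norm_num)]
          linarith [Real.add_one_lt_exp (x := (1 / 2 : ℝ)) (by norm_num)]
  calc 1 / 3 < 1 - ‖exp w‖ := by rw [norm_exp]; linarith
    _ ≤ ‖exp w - 1‖ := by simpa [norm_sub_rev] using norm_sub_norm_le (1 : ℂ) (exp w)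

theorem one_le_norm_exp_sub_one_of_cos_im_nonpos {w : ℂ} (hw : Real.cos w.im ≤ 0) :
    1 ≤ ‖exp w - 1‖ := by
  have hre : (exp w - 1).re ≤ -1 := by
    rw [sub_re, exp_re, one_re]
    nlinarith [Real.exp_pos w.re]
  calc (1 : ℝ) ≤ |(exp w - 1).re| := by rw [abs_of_neg (by linarith)]; linarith
    _ ≤ ‖exp w - 1‖ := abs_re_le_norm _

theorem one_le_norm_exp_sub_one_of_sqrt_three_lt_norm_add {w : ℂ} (hre : |w.re| < 1 / 2)
    (h : ∀ n : ℤ, √3 < ‖w + n * (2 * π * I)‖) : 1 ≤ ‖exp w - 1‖ := by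
  refine one_le_norm_exp_sub_one_of_cos_im_nonpos
    (Real.cos_nonpos_of_forall_pi_div_two_le_abs_add_int_mul_two_pi fun n => ?_)
  have hsq : 3 < w.re ^ 2 + (w.im + n * (2 * π)) ^ 2 := by
    have hre' : (w + n * (2 * π * I)).re = w.re := by simp
    have him' : (w + n * (2 * π * I)).im = w.im + n * (2 * π) := by simp
    have h3 := (Real.sqrt_lt' ((Real.sqrt_nonneg 3).trans_lt (h n))).1 (h n)
    rw [Complex.sq_norm, normSq_apply, hre', him'] at h3
    nlinarith
  have hre2 : w.re ^ 2 < 1 / 4 := by nlinarith [sq_abs w.re, abs_nonneg w.re]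
  have hpi : (π / 2) ^ 2 < 11 / 4 := by nlinarith [Real.pi_pos, Real.pi_lt_d2]
  calc π / 2 = |π / 2| := (abs_of_pos (by positivity)).symm
    _ ≤ |w.im + n * (2 * π)| := sq_le_sq.1 (by linarith)

theorem one_third_lt_norm_exp_sub_one {w : ℂ} (hre : w.re < 1 / 2)
    (h : ∀ n : ℤ, √3 < ‖w + n * (2 * π * I)‖) : 1 / 3 < ‖exp w - 1‖ := by
  rcases le_or_gt w.re (-1 / 2) with hle | hgt
  · exact one_third_lt_norm_exp_sub_one_of_re_le hle
  · linarith [one_le_norm_exp_sub_one_of_sqrt_three_lt_norm_add (abs_lt.2 ⟨by linarith, hre⟩) h]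

theorem one_third_lt_norm_exp_mul_cpow_sub_one_of_arg_pos {lam : ℂ} (harg : 0 < arg lam)
    (habs : 1 < ‖lam‖)
    (hD : ∀ n : ℕ, 1 ≤ n → 1 < ‖(-lam) ^ ((1 : ℂ) / 3) - ((2 * π * n / √3 : ℝ) : ℂ)‖) :
    1 / 3 < ‖exp ((-3 / 2 - √3 / 2 * I) * lam ^ ((1 : ℂ) / 3)) - 1‖ := by
  set ζ := (-lam) ^ ((1 : ℂ) / 3) with hζ
  have hw : (-3 / 2 - √3 / 2 * I) * lam ^ ((1 : ℂ) / 3) = -(√3 * I) * ζ := by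
    rw [cpow_eq_exp_mul_neg_cpow_of_arg_pos harg, ← mul_assoc,
      show (π : ℂ) * I * (1 / 3) = π * I / 3 by ring,
      neg_three_halves_sub_mul_exp_pi_mul_I_div_three]
  have hζim : ζ.im ≤ 0 := by
    rw [hζ, show (1 : ℂ) / 3 = ((1 / 3 : ℝ) : ℂ) by push_cast; ring]
    exact im_cpow_ofReal_nonpos (by rw [arg_neg_of_arg_pos harg]; linarith [arg_le_pi lam])
      (by norm_num) (by norm_num)
  have hsqrt3 : 0 < √3 := by positivity
  have hc : 1 ≤ 2 * π / √3 := by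
    rw [le_div_iff₀ hsqrt3]
    nlinarith [(Real.sqrt_lt' two_pos).2 (by norm_num : (3 : ℝ) < 2 ^ 2), Real.pi_gt_three]
  rw [hw]
  refine one_third_lt_norm_exp_sub_one ?_ fun n => ?_
  · rw [show (-(√3 * I) * ζ).re = √3 * ζ.im by simp]
    linarith [mul_nonpos_of_nonneg_of_nonpos hsqrt3.le hζim]
  · have hfar := one_lt_norm_cpow_one_third_sub_int_mul (by rwa [norm_neg]) hc
      (fun n hn => by convert hD n hn using 4; ring) n
    calc √3 = √3 * 1 := (mul_one _).symm
      _ < √3 * ‖ζ - ((n * (2 * π / √3) : ℝ) : ℂ)‖ := by gcongr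
      _ = ‖-(√3 * I) * ζ + n * (2 * π * I)‖ := by
          rw [show -(√3 * I) * ζ + n * (2 * π * I)
              = -(√3 * I) * (ζ - ((n * (2 * π / √3) : ℝ) : ℂ)) by
            push_cast; field_simp; ring]
          simp [abs_of_pos hsqrt3]

/-- Let `ω = e^{2πi/3}`, `λ` with `Im λ ≥ 0`, `|λ| > 1`, `z = λ^{1/3}`
(principal cube root, argument in `(−π/3, π/3]`), and suppose
`|(−λ)^{1/3} − 2πn/√3| > 1` for every integer `n ≥ 1`.
Then `|e^{(ω²−1)z} − 1| > 1/3`. -/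
theorem exp_omega_sq_sub_one_z_bound
    (ω lam : ℂ) (hω : ω = Complex.exp (2 * Real.pi * Complex.I / 3))
    (him : 0 ≤ lam.im) (habs : 1 < ‖lam‖)
    (hD : ∀ n : ℕ, 1 ≤ n →
      1 < ‖(-lam) ^ ((1:ℂ)/3) - ((2 * Real.pi * n / Real.sqrt 3 : ℝ) : ℂ)‖) :
    1/3 < ‖Complex.exp ((ω ^ 2 - 1) * lam ^ ((1:ℂ)/3)) - 1‖ := by
  rw [hω, exp_two_pi_mul_I_div_three_sq_sub_one]
  rcases (arg_nonneg_iff.2 him).eq_or_lt with harg | harg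
  · apply one_third_lt_norm_exp_sub_one_of_re_le
    rw [show (1 : ℂ) / 3 = ((1 / 3 : ℝ) : ℂ) by push_cast; ring,
      cpow_ofReal_of_arg_eq_zero harg.symm, re_mul_ofReal,
      show (-3 / 2 - √3 / 2 * I).re = -3 / 2 by simp]
    linarith [Real.one_lt_rpow habs (by norm_num : (0 : ℝ) < 1 / 3)]
  · exact one_third_lt_norm_exp_mul_cpow_sub_one_of_arg_pos harg habs hD
end

section
/- There exist constants c₀ > 0 and C > 0 with the following property. Let ω = e^{2πi/3} and let z ∈ ℂ satisfy |z| ≥ 1, Re(ωz) ≤ Re(ω²z) ≤ Re(z), |e^{(ω−1)z}| ≤ e^{−3/2}, and |e^{(ω²−1)z} − 1| > 1/3. Let 0 ≤ a, b ≤ c₀ and let G ∈ M₃(ℂ) satisfy |G_{jj} − 1| ≤ a/|z|⁴ for j = 1,2,3 and |G_{jk}| ≤ b/|z|² for j ≠ k. Then the unique eigenvalue τ₃ of T = (e^{ω^j z} G_{jk})_{j,k=1}^3 lying in the Gershgorin disc Γ₃ = {τ : |τ − e^{z}G_{33}| ≤ |e^{z}|(|G_{31}| + |G_{32}|)} satisfies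 |e^{−z} τ₃ − 1| ≤ C(a + b²)/|z|⁴. -/
open Matrix Complex Polynomial

/-!
Dividing by `e^z` turns `T` into `S = (d_j G_{jk})` with `d = (e^{(ω-1)z}, e^{(ω²-1)z}, 1)`:
its off-diagonal entries are `O(b/|z|²)`, `S₂₂` is close to `1`, and `S₀₀`, `S₁₁` stay a fixed
distance away from `1` (`Matrix.IsolatedLastDiag`). Expand
`det (x - S) = (x - S₂₂) Q(x) - R(x)`, where `R` collects the terms containing `S₂₀` or `S₂₁`
and is `O(β²)`. At `x = S₂₂` this forces a root into the third Gershgorin disc, since otherwise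
all three roots lie in the other two discs, far from `S₂₂`. A second root there would, through
the trace, force the third root far from every disc. At a root `σ` in the third disc `|Q(σ)|` is
bounded below, so `|σ - S₂₂| = O(β²)`.
-/

namespace Matrix

section NormedField

variable {K : Type*} [NormedField K] {n : Type*} [Fintype n] [DecidableEq n]

def gershgorinDisc (A : Matrix n n K) (i : n) : Set K :=
  Metric.closedBall (A i i) (∑ j ∈ Finset.univ.erase i, ‖A i j‖)

theorem exists_mem_gershgorinDisc_of_isRoot {A : Matrix n n K} {μ : K}
    (hμ : A.charpoly.IsRoot μ) : ∃ i, μ ∈ A.gershgorinDisc i :=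
  eigenvalue_mem_ball <| by
    rwa [Module.End.hasEigenvalue_iff_isRoot_charpoly, charpoly_toLin']

theorem norm_sub_le_of_mem_gershgorinDisc {A : Matrix n n K} {i : n} {β : ℝ}
    (hoff : ∀ j, j ≠ i → ‖A i j‖ ≤ β) {μ : K} (hμ : μ ∈ A.gershgorinDisc i) :
    ‖μ - A i i‖ ≤ (Fintype.card n - 1 : ℕ) * β := by
  rw [gershgorinDisc, Metric.mem_closedBall, dist_eq_norm] at hμ
  refine hμ.trans ?_
  have := Finset.sum_le_card_nsmul (Finset.univ.erase i) (fun j => ‖A i j‖) β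
    (fun j hj => hoff j (Finset.ne_of_mem_erase hj))
  rwa [Finset.card_erase_of_mem (Finset.mem_univ i), nsmul_eq_mul, Finset.card_univ] at this

theorem mul_mem_gershgorinDisc_smul_iff {A : Matrix n n K} {c : K} (hc : c ≠ 0) {i : n}
    {μ : K} : c * μ ∈ (c • A).gershgorinDisc i ↔ μ ∈ A.gershgorinDisc i := by
  simp only [gershgorinDisc, Metric.mem_closedBall, dist_eq_norm, smul_apply, smul_eq_mul,
    norm_mul, ← Finset.mul_sum, ← mul_sub]
  exact mul_le_mul_iff_right₀ (norm_pos_iff.2 hc)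

theorem isRoot_charpoly_smul_mul_iff {A : Matrix n n K} {c : K} (hc : c ≠ 0) {μ : K} :
    (c • A).charpoly.IsRoot (c * μ) ↔ A.charpoly.IsRoot μ := by
  have : scalar n (c * μ) - c • A = c • (scalar n μ - A) := by
    ext i j; by_cases h : i = j <;> simp [h, mul_sub]
  rw [IsRoot.def, IsRoot.def, eval_charpoly, eval_charpoly, this, det_smul]
  simp [hc]

end NormedField

section CommRing

variable {R : Type*} [CommRing R]

def lastCoupling (A : Matrix (Fin 3) (Fin 3) R) (x : R) : R :=
  (x - A 0 0) * A 1 2 * A 2 1 + A 0 1 * A 1 2 * A 2 0 + A 0 2 * A 1 0 * A 2 1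
    + A 0 2 * (x - A 1 1) * A 2 0

theorem eval_charpoly_fin_three (A : Matrix (Fin 3) (Fin 3) R) (x : R) :
    A.charpoly.eval x =
      (x - A 2 2) * ((x - A 0 0) * (x - A 1 1) - A 0 1 * A 1 0) - A.lastCoupling x := by
  rw [eval_charpoly, det_fin_three, lastCoupling]
  simp only [scalar_apply, Fin.isValue, sub_apply, diagonal_apply_eq, ne_eq, Fin.reduceEq,
    not_false_eq_true, diagonal_apply_ne, zero_sub, mul_neg, neg_mul, neg_neg]
  ring

end CommRing

theorem norm_lastCoupling_le {K : Type*} [NormedField K] {A : Matrix (Fin 3) (Fin 3) K}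
    {β : ℝ} (hoff : ∀ j k, j ≠ k → ‖A j k‖ ≤ β) (hβ : β ≤ 1) (x : K) :
    ‖A.lastCoupling x‖ ≤ (‖x - A 0 0‖ + ‖x - A 1 1‖ + 2) * β ^ 2 := by
  have h01 := hoff 0 1 (by decide); have h02 := hoff 0 2 (by decide)
  have h10 := hoff 1 0 (by decide); have h12 := hoff 1 2 (by decide)
  have h20 := hoff 2 0 (by decide); have h21 := hoff 2 1 (by decide)
  have hβ0 : 0 ≤ β := (norm_nonneg _).trans h01
  have hβ3 : β ^ 3 ≤ β ^ 2 := pow_le_pow_of_le_one hβ0 hβ (by norm_num)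
  unfold lastCoupling
  refine (norm_add₄_le ..).trans ?_
  simp only [norm_mul]
  have t1 : ‖x - A 0 0‖ * ‖A 1 2‖ * ‖A 2 1‖ ≤ ‖x - A 0 0‖ * β * β := by gcongr
  have t2 : ‖A 0 1‖ * ‖A 1 2‖ * ‖A 2 0‖ ≤ β * β * β := by gcongr
  have t3 : ‖A 0 2‖ * ‖A 1 0‖ * ‖A 2 1‖ ≤ β * β * β := by gcongr
  have t4 : ‖A 0 2‖ * ‖x - A 1 1‖ * ‖A 2 0‖ ≤ β * ‖x - A 1 1‖ * β := by gcongr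
  nlinarith

theorem exists_isRoot_charpoly_trace_eq {K : Type*} [Field K] [IsAlgClosed K]
    {A : Matrix (Fin 3) (Fin 3) K} {μ ν : K} (hμ : A.charpoly.IsRoot μ)
    (hν : A.charpoly.IsRoot ν) (hne : μ ≠ ν) :
    ∃ w, A.charpoly.IsRoot w ∧ A.trace = μ + ν + w := by
  have hA := A.charpoly_monic.ne_zero
  obtain ⟨s, hs⟩ := Multiset.exists_cons_of_mem ((mem_roots hA).2 hμ)
  have hνs : ν ∈ s := by
    simpa [hs, hne.symm] using (mem_roots hA).2 hν
  obtain ⟨t, rfl⟩ := Multiset.exists_cons_of_mem hνs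
  have hcard : A.charpoly.roots.card = 3 := by
    rw [IsAlgClosed.card_roots_eq_natDegree, charpoly_natDegree_eq_dim, Fintype.card_fin]
  obtain ⟨w, rfl⟩ : ∃ w, t = {w} := Multiset.card_eq_one.1 (by simpa [hs] using hcard)
  refine ⟨w, (mem_roots hA).1 (by simp [hs]), ?_⟩
  rw [trace_eq_sum_roots_charpoly, hs]
  simp [add_assoc]

structure IsolatedLastDiag (T : Matrix (Fin 3) (Fin 3) ℂ) (β : ℝ) : Prop where
  norm_offDiag_le : ∀ j k, j ≠ k → ‖T j k‖ ≤ β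
  le_one_div_hundred : β ≤ 1 / 100
  norm_two_two_sub_one_le : ‖T 2 2 - 1‖ ≤ 1 / 100
  norm_zero_zero_le : ‖T 0 0‖ ≤ 1 / 2
  norm_one_one_le : ‖T 1 1‖ ≤ 5 / 4
  le_norm_one_one_sub_one : 1 / 4 ≤ ‖T 1 1 - 1‖

theorem IsolatedLastDiag.of_mul_rows {d : Fin 3 → ℂ} {G : Matrix (Fin 3) (Fin 3) ℂ}
    {α β : ℝ} (hd₀ : ‖d 0‖ ≤ 2 / 5) (hd₁ : ‖d 1‖ ≤ 1) (hd₁_sub : 1 / 3 < ‖d 1 - 1‖)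
    (hd₂ : d 2 = 1) (hα : α ≤ 1 / 100) (hβ : β ≤ 1 / 100) (hdiag : ∀ j, ‖G j j - 1‖ ≤ α)
    (hoff : ∀ j k, j ≠ k → ‖G j k‖ ≤ β) :
    IsolatedLastDiag (of fun j k => d j * G j k) β := by
  have hd : ∀ j, ‖d j‖ ≤ 1
    | 0 => by linarith
    | 1 => hd₁
    | 2 => by simp [hd₂]
  have hG : ∀ j, ‖G j j‖ ≤ 101 / 100 := fun j => by
    linarith [norm_le_norm_add_norm_sub' (G j j) 1, hdiag j, norm_one (α := ℂ)]
  refine ⟨fun j k hjk => ?_, hβ, ?_, ?_, ?_, ?_⟩ <;> simp only [of_apply, norm_mul]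
  · simpa using mul_le_mul (hd j) (hoff j k hjk) (norm_nonneg _) zero_le_one
  · simpa [hd₂] using (hdiag 2).trans hα
  · nlinarith [hG 0, norm_nonneg (d 0), norm_nonneg (G 0 0)]
  · nlinarith [hG 1, norm_nonneg (d 1), norm_nonneg (G 1 1)]
  · have := norm_sub_le_norm_sub_add_norm_sub (d 1) (d 1 * G 1 1) 1
    rw [show d 1 - d 1 * G 1 1 = -(d 1 * (G 1 1 - 1)) by ring, norm_neg, norm_mul] at this
    nlinarith [hdiag 1, norm_nonneg (d 1), norm_nonneg (G 1 1 - 1)]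

namespace IsolatedLastDiag

variable {T : Matrix (Fin 3) (Fin 3) ℂ} {β : ℝ}

theorem nonneg (hT : IsolatedLastDiag T β) : 0 ≤ β :=
  (norm_nonneg _).trans (hT.norm_offDiag_le 0 1 (by decide))

theorem norm_sub_le_of_mem_gershgorinDisc (hT : IsolatedLastDiag T β) {i : Fin 3} {μ : ℂ}
    (hμ : μ ∈ T.gershgorinDisc i) : ‖μ - T i i‖ ≤ 2 * β := by
  simpa using Matrix.norm_sub_le_of_mem_gershgorinDisc
    (fun j hj => hT.norm_offDiag_le i j (Ne.symm hj)) hμ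

theorem norm_two_two_le (hT : IsolatedLastDiag T β) : ‖T 2 2‖ ≤ 101 / 100 := by
  linarith [norm_le_norm_add_norm_sub' (T 2 2) 1, norm_one (α := ℂ), hT.norm_two_two_sub_one_le]

theorem le_norm_two_two (hT : IsolatedLastDiag T β) : 99 / 100 ≤ ‖T 2 2‖ := by
  have := norm_sub_norm_le (1 : ℂ) (T 2 2)
  rw [norm_one, norm_sub_rev] at this
  linarith [hT.norm_two_two_sub_one_le]

theorem le_norm_two_two_sub_zero_zero (hT : IsolatedLastDiag T β) :
    49 / 100 ≤ ‖T 2 2 - T 0 0‖ := by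
  have := norm_add₃_le (a := 1 - T 2 2) (b := T 2 2 - T 0 0) (c := T 0 0)
  rw [show 1 - T 2 2 + (T 2 2 - T 0 0) + T 0 0 = 1 by ring, norm_one, norm_sub_rev 1] at this
  linarith [hT.norm_two_two_sub_one_le, hT.norm_zero_zero_le]

theorem le_norm_two_two_sub_one_one (hT : IsolatedLastDiag T β) :
    6 / 25 ≤ ‖T 2 2 - T 1 1‖ := by
  have := norm_sub_le_norm_sub_add_norm_sub (T 1 1) (T 2 2) 1
  rw [norm_sub_rev (T 1 1) (T 2 2)] at this
  linarith [hT.norm_two_two_sub_one_le, hT.le_norm_one_one_sub_one]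

theorem three_div_fifty_lt_norm_diag_sub (hT : IsolatedLastDiag T β) :
    ∀ i : Fin 3, 3 / 50 < ‖T i i - (T 0 0 + T 1 1 - T 2 2)‖
  | 0 => by
    rw [show T 0 0 - (T 0 0 + T 1 1 - T 2 2) = T 2 2 - T 1 1 by ring]
    linarith [hT.le_norm_two_two_sub_one_one]
  | 1 => by
    rw [show T 1 1 - (T 0 0 + T 1 1 - T 2 2) = T 2 2 - T 0 0 by ring]
    linarith [hT.le_norm_two_two_sub_zero_zero]
  | 2 => by
    have := norm_add₃_le (a := T 2 2 - (T 0 0 + T 1 1 - T 2 2)) (b := T 0 0) (c := T 1 1)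
    rw [show T 2 2 - (T 0 0 + T 1 1 - T 2 2) + T 0 0 + T 1 1 = 2 * T 2 2 by ring, norm_mul,
      Complex.norm_two] at this
    linarith [hT.le_norm_two_two, hT.norm_zero_zero_le, hT.norm_one_one_le]

theorem one_div_five_le_norm_sub_of_not_mem (hT : IsolatedLastDiag T β) {r : ℂ}
    (hr : T.charpoly.IsRoot r) (hr₂ : r ∉ T.gershgorinDisc 2) : 1 / 5 ≤ ‖T 2 2 - r‖ := by
  obtain ⟨i, hi⟩ := exists_mem_gershgorinDisc_of_isRoot hr
  have hri := hT.norm_sub_le_of_mem_gershgorinDisc hi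
  have := norm_sub_le_norm_sub_add_norm_sub (T 2 2) r (T i i)
  have := hT.le_one_div_hundred
  match i with
  | 0 => linarith [hT.le_norm_two_two_sub_zero_zero]
  | 1 => linarith [hT.le_norm_two_two_sub_one_one]
  | 2 => exact absurd hi hr₂

theorem exists_isRoot_mem_gershgorinDisc (hT : IsolatedLastDiag T β) :
    ∃ σ, σ ∈ T.gershgorinDisc 2 ∧ T.charpoly.IsRoot σ := by
  by_contra! hnone
  have hfar : ∀ r ∈ T.charpoly.roots, 1 / 5 ≤ ‖T 2 2 - r‖ := fun r hr =>
    have hr := (mem_roots T.charpoly_monic.ne_zero).1 hr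
    hT.one_div_five_le_norm_sub_of_not_mem hr fun hr₂ => hnone r hr₂ hr
  obtain ⟨r₁, r₂, r₃, hroots⟩ : ∃ r₁ r₂ r₃, T.charpoly.roots = {r₁, r₂, r₃} := by
    apply Multiset.card_eq_three.1
    rw [IsAlgClosed.card_roots_eq_natDegree, charpoly_natDegree_eq_dim, Fintype.card_fin]
  have hprod : T.charpoly.eval (T 2 2) = (T 2 2 - r₁) * ((T 2 2 - r₂) * (T 2 2 - r₃)) := by
    conv_lhs => rw [(IsAlgClosed.splits T.charpoly).eq_prod_roots_of_monic T.charpoly_monic]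
    simp [hroots]
  have hlower : 1 / 125 ≤ ‖T.charpoly.eval (T 2 2)‖ := by
    rw [hprod, norm_mul, norm_mul]
    have := hfar r₁ (by simp [hroots])
    have := hfar r₂ (by simp [hroots])
    have := hfar r₃ (by simp [hroots])
    calc (1 / 125 : ℝ) = 1 / 5 * (1 / 5 * (1 / 5)) := by norm_num
      _ ≤ _ := by gcongr
  have hupper : ‖T.charpoly.eval (T 2 2)‖ ≤ 6 * β ^ 2 := by
    rw [eval_charpoly_fin_three, sub_self, zero_mul, zero_sub, norm_neg]
    refine (norm_lastCoupling_le hT.norm_offDiag_le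
      (by linarith [hT.le_one_div_hundred]) _).trans ?_
    gcongr
    linarith [norm_sub_le (T 2 2) (T 0 0), norm_sub_le (T 2 2) (T 1 1), hT.norm_two_two_le,
      hT.norm_zero_zero_le, hT.norm_one_one_le]
  nlinarith [hT.le_one_div_hundred, hT.nonneg]

theorem eq_of_isRoot_mem_gershgorinDisc (hT : IsolatedLastDiag T β) {σ ν : ℂ}
    (hσ : σ ∈ T.gershgorinDisc 2) (hσr : T.charpoly.IsRoot σ) (hν : ν ∈ T.gershgorinDisc 2)
    (hνr : T.charpoly.IsRoot ν) : σ = ν := by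
  by_contra hne
  obtain ⟨w, hwr, htr⟩ := exists_isRoot_charpoly_trace_eq hσr hνr hne
  obtain ⟨i, hw⟩ := exists_mem_gershgorinDisc_of_isRoot hwr
  rw [trace_fin_three] at htr
  have hsplit : T i i - (T 0 0 + T 1 1 - T 2 2)
      = -((w - T i i) + (σ - T 2 2) + (ν - T 2 2)) := by
    linear_combination -htr
  have := norm_add₃_le (a := w - T i i) (b := σ - T 2 2) (c := ν - T 2 2)
  rw [← norm_neg, ← hsplit] at this
  linarith [hT.three_div_fifty_lt_norm_diag_sub i, hT.norm_sub_le_of_mem_gershgorinDisc hw,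
    hT.norm_sub_le_of_mem_gershgorinDisc hσ, hT.norm_sub_le_of_mem_gershgorinDisc hν,
    hT.le_one_div_hundred]

theorem existsUnique_isRoot_mem_gershgorinDisc (hT : IsolatedLastDiag T β) :
    ∃! σ, σ ∈ T.gershgorinDisc 2 ∧ T.charpoly.IsRoot σ :=
  let ⟨σ, hσ, hσr⟩ := hT.exists_isRoot_mem_gershgorinDisc
  ⟨σ, ⟨hσ, hσr⟩, fun _ ⟨hν, hνr⟩ => hT.eq_of_isRoot_mem_gershgorinDisc hν hνr hσ hσr⟩

theorem norm_sub_le_of_isRoot_mem_gershgorinDisc (hT : IsolatedLastDiag T β) {σ : ℂ}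
    (hσ : σ ∈ T.gershgorinDisc 2) (hσr : T.charpoly.IsRoot σ) :
    ‖σ - T 2 2‖ ≤ 70 * β ^ 2 := by
  have hβ := hT.le_one_div_hundred
  have hσ₂ := hT.norm_sub_le_of_mem_gershgorinDisc hσ
  have h₀ : 47 / 100 ≤ ‖σ - T 0 0‖ := by
    linarith [norm_sub_le_norm_sub_add_norm_sub (T 2 2) σ (T 0 0), norm_sub_rev σ (T 2 2),
      hT.le_norm_two_two_sub_zero_zero]
  have h₁ : 11 / 50 ≤ ‖σ - T 1 1‖ := by
    linarith [norm_sub_le_norm_sub_add_norm_sub (T 2 2) σ (T 1 1), norm_sub_rev σ (T 2 2),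
      hT.le_norm_two_two_sub_one_one]
  have hblock : 1 / 10 ≤ ‖(σ - T 0 0) * (σ - T 1 1) - T 0 1 * T 1 0‖ := by
    have := norm_sub_norm_le ((σ - T 0 0) * (σ - T 1 1)) (T 0 1 * T 1 0)
    rw [norm_mul, norm_mul] at this
    have : ‖T 0 1‖ * ‖T 1 0‖ ≤ 1 / 100 * (1 / 100) := by
      gcongr <;> linarith [hT.norm_offDiag_le 0 1 (by decide), hT.norm_offDiag_le 1 0 (by decide)]
    nlinarith
  have hcoupling : ‖T.lastCoupling σ‖ ≤ 7 * β ^ 2 := by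
    refine (norm_lastCoupling_le hT.norm_offDiag_le (by linarith) σ).trans ?_
    gcongr
    linarith [norm_sub_le_norm_sub_add_norm_sub σ (T 2 2) (T 0 0), norm_sub_le (T 2 2) (T 0 0),
      norm_sub_le_norm_sub_add_norm_sub σ (T 2 2) (T 1 1), norm_sub_le (T 2 2) (T 1 1),
      hT.norm_two_two_le, hT.norm_zero_zero_le, hT.norm_one_one_le]
  have hfactor : ‖σ - T 2 2‖ * ‖(σ - T 0 0) * (σ - T 1 1) - T 0 1 * T 1 0‖
      = ‖T.lastCoupling σ‖ := by
    rw [← norm_mul, ← sub_eq_zero.1 ((eval_charpoly_fin_three T σ).symm.trans hσr)]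
  nlinarith [norm_nonneg (σ - T 2 2)]

theorem existsUnique_isRoot_mem_gershgorinDisc_smul (hT : IsolatedLastDiag T β) {c : ℂ}
    (hc : c ≠ 0) : ∃! τ, τ ∈ (c • T).gershgorinDisc 2 ∧ (c • T).charpoly.IsRoot τ := by
  rw [← (Equiv.mulLeft₀ c hc).existsUnique_congr_right]
  simpa only [Equiv.mulLeft₀_apply, mul_mem_gershgorinDisc_smul_iff hc,
    isRoot_charpoly_smul_mul_iff hc] using hT.existsUnique_isRoot_mem_gershgorinDisc

theorem norm_inv_mul_sub_le_of_isRoot_mem_gershgorinDisc_smul (hT : IsolatedLastDiag T β)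
    {c τ : ℂ} (hc : c ≠ 0) (hτ : τ ∈ (c • T).gershgorinDisc 2)
    (hτr : (c • T).charpoly.IsRoot τ) : ‖c⁻¹ * τ - T 2 2‖ ≤ 70 * β ^ 2 := by
  rw [← mul_inv_cancel_left₀ hc τ] at hτ hτr
  exact hT.norm_sub_le_of_isRoot_mem_gershgorinDisc
    ((mul_mem_gershgorinDisc_smul_iff hc).1 hτ) ((isRoot_charpoly_smul_mul_iff hc).1 hτr)

end IsolatedLastDiag

end Matrix

theorem Real.exp_neg_three_halves_le : Real.exp (-(3 / 2)) ≤ 2 / 5 := by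
  rw [Real.exp_neg, inv_le_comm₀ (Real.exp_pos _) (by norm_num)]
  linarith [Real.add_one_le_exp (3 / 2 : ℝ)]

theorem Matrix.of_exp_mul_eq_exp_smul {m n : Type*} (w : m → ℂ) (G : Matrix m n ℂ) (z : ℂ) :
    of (fun j k => Complex.exp (w j) * G j k)
      = Complex.exp z • of fun j k => Complex.exp (w j - z) * G j k := by
  ext j k
  rw [Matrix.smul_apply, of_apply, of_apply, smul_eq_mul, ← mul_assoc, ← Complex.exp_add,
    add_sub_cancel]

theorem Matrix.IsolatedLastDiag.of_exp_sector {ω z : ℂ} (hω : ω ^ 3 = 1)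
    (hre : (ω ^ 2 * z).re ≤ z.re) (hd₀ : ‖Complex.exp ((ω - 1) * z)‖ ≤ Real.exp (-(3 / 2)))
    (hd₁ : 1 / 3 < ‖Complex.exp ((ω ^ 2 - 1) * z) - 1‖) {G : Matrix (Fin 3) (Fin 3) ℂ}
    {α β : ℝ} (hα : α ≤ 1 / 100) (hβ : β ≤ 1 / 100) (hdiag : ∀ j, ‖G j j - 1‖ ≤ α)
    (hoff : ∀ j k, j ≠ k → ‖G j k‖ ≤ β) :
    IsolatedLastDiag (of fun j k => Complex.exp (ω ^ ((j : ℕ) + 1) * z - z) * G j k) β := by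
  refine of_mul_rows ?_ ?_ ?_ (by simp [hω]) hα hβ hdiag hoff
  · simpa [sub_mul] using hd₀.trans Real.exp_neg_three_halves_le
  · simpa [Complex.norm_exp] using hre
  · simpa [sub_mul] using hd₁

/-- There exist `c₀ > 0` and `C > 0` such that for all `z` with `|z| ≥ 1`
satisfying the stated sector conditions, and all `G` with `|G_{jj} − 1| ≤ a/|z|⁴`,
`|G_{jk}| ≤ b/|z|²` (`0 ≤ a, b ≤ c₀`), the matrix `T = (e^{ω^j z} G_{jk})` has a unique
eigenvalue `τ₃` in its third Gershgorin disc `Γ₃`, and it satisfies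
`|e^{−z} τ₃ − 1| ≤ C(a + b²)/|z|⁴`. -/
theorem multiplier_asymptotics :
    ∃ c₀ > (0:ℝ), ∃ C > (0:ℝ),
      ∀ (ω z : ℂ), ω = Complex.exp (2 * Real.pi * Complex.I / 3) →
      1 ≤ ‖z‖ →
      (ω * z).re ≤ (ω ^ 2 * z).re → (ω ^ 2 * z).re ≤ z.re →
      ‖Complex.exp ((ω - 1) * z)‖ ≤ Real.exp (-(3/2)) →
      1/3 < ‖Complex.exp ((ω ^ 2 - 1) * z) - 1‖ →
      ∀ a b : ℝ, 0 ≤ a → a ≤ c₀ → 0 ≤ b → b ≤ c₀ →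
      ∀ G : Matrix (Fin 3) (Fin 3) ℂ,
      (∀ j : Fin 3, ‖G j j - 1‖ ≤ a / ‖z‖ ^ 4) →
      (∀ j k : Fin 3, j ≠ k → ‖G j k‖ ≤ b / ‖z‖ ^ 2) →
      ∀ T : Matrix (Fin 3) (Fin 3) ℂ,
      T = Matrix.of (fun (j k : Fin 3) => Complex.exp (ω ^ ((j : ℕ) + 1) * z) * G j k) →
      ∀ Γ₃ : Set ℂ,
      Γ₃ = {τ : ℂ | ‖τ - Complex.exp z * G 2 2‖
        ≤ ‖Complex.exp z‖ * (‖G 2 0‖ + ‖G 2 1‖)} →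
      (∃! τ : ℂ, τ ∈ Γ₃ ∧ T.charpoly.IsRoot τ) ∧
      ∀ τ₃ : ℂ, τ₃ ∈ Γ₃ → T.charpoly.IsRoot τ₃ →
        ‖Complex.exp (-z) * τ₃ - 1‖ ≤ C * (a + b ^ 2) / ‖z‖ ^ 4 := by
  refine ⟨1 / 100, by norm_num, 70, by norm_num, ?_⟩
  intro ω z hω hz _ hre hd₀ hd₁ a b ha ha' hb hb' G hdiag hoff T hT Γ₃ hΓ
  have hω : ω ^ 3 = 1 := by
    simpa [hω] using (Complex.isPrimitiveRoot_exp 3 (by norm_num)).pow_eq_one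
  set S := of fun (j k : Fin 3) => Complex.exp (ω ^ ((j : ℕ) + 1) * z - z) * G j k
  have hS : S.IsolatedLastDiag (b / ‖z‖ ^ 2) :=
    .of_exp_sector hω hre hd₀ hd₁ ((div_le_self ha (one_le_pow₀ hz)).trans ha')
      ((div_le_self hb (one_le_pow₀ hz)).trans hb') hdiag hoff
  have hTS : T = Complex.exp z • S := hT.trans (of_exp_mul_eq_exp_smul _ G z)
  have hΓS : Γ₃ = (Complex.exp z • S).gershgorinDisc 2 := by
    ext τ
    rw [hΓ, gershgorinDisc, show Finset.univ.erase (2 : Fin 3) = {0, 1} by decide]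
    simp [S, hω, dist_eq_norm, mul_add]
  subst hTS hΓS
  refine ⟨hS.existsUnique_isRoot_mem_gershgorinDisc_smul (Complex.exp_ne_zero z),
    fun τ hτ hτr => ?_⟩
  have hσ : ‖Complex.exp (-z) * τ - G 2 2‖ ≤ 70 * (b ^ 2 / ‖z‖ ^ 4) := by
    simpa [S, hω, Complex.exp_neg, div_pow, ← pow_mul] using
      hS.norm_inv_mul_sub_le_of_isRoot_mem_gershgorinDisc_smul (Complex.exp_ne_zero z) hτ hτr
  calc ‖Complex.exp (-z) * τ - 1‖ ≤ ‖Complex.exp (-z) * τ - G 2 2‖ + ‖G 2 2 - 1‖ :=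
        norm_sub_le_norm_sub_add_norm_sub _ _ _
    _ ≤ 70 * (b ^ 2 / ‖z‖ ^ 4) + a / ‖z‖ ^ 4 := add_le_add hσ (hdiag 2)
    _ ≤ 70 * (a + b ^ 2) / ‖z‖ ^ 4 := by
        rw [mul_add, add_div, mul_div_assoc, mul_div_assoc]
        linarith [show 0 ≤ a / ‖z‖ ^ 4 by positivity]
end
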